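/- arXiv:2402.01232 — 2 statements merged into one kernel-verified Lean document; each statement's English description precedes it below -/
import Mathlib

section
/- Let Ω = [0,L₁] × [0,L₂] be a rectangle, let c = (c₁,c₂) : ℝ² → ℝ² and Φ : ℝ² → ℝ^N be continuously differentiable, and define M = ∬_Ω Φ(ζ)Φ(ζ)ᵀ dζ, (F₁)_{ij} = -∬_Ω φᵢ(ζ) div(c φⱼ)(ζ) dζ, Q_c = ∬_Ω Φ(ζ) div(c)(ζ) Φ(ζ)ᵀ dζ, and the boundary matrix S = ∮_Γ ΦΦᵀ cᵀn ds (the signed sum of the four edge integrals of ΦΦᵀ times the normal component of c). Suppose x_d : ℝ → ℝ^N is differentiable and satisfies M ẋ_d(t) = F₁ x_d(t) for all t. Then the discretized Hamiltonian H_d(t) = (1/2) x_d(t)ᵀ M x_d(t) satisfies Ḣ_d(t) = -(1/2) x_d(t)ᵀ Q_c x_d(t) - (1/2) x_d(t)ᵀ S x_d(t); in particular, if div(c) = 0 on Ω then Ḣ_d(t) = -(1/2) x_d(t)ᵀ S x_d(t), so the finite element discretization preserves the scattering energy balance of the two-dimensional transport equation. -/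
/-! Pointwise, the product rule gives
`φᵢ div(c φⱼ) + φⱼ div(c φᵢ) = φᵢ div(c) φⱼ + div(φᵢ φⱼ c)`, and the divergence theorem on the
rectangle turns the integral of the last term into the boundary flux `S_ij`; hence
`F₁ + F₁ᵀ = -(Q_c + S)`. As `M` is symmetric,
`Ḣ_d = x_dᵀ M ẋ_d = x_dᵀ F₁ x_d = ½ x_dᵀ (F₁ + F₁ᵀ) x_d`. -/

open MeasureTheory Set Matrix

section PartialDerivatives

variable {E : Type*} [NormedAddCommGroup E] [NormedSpace ℝ E] {F : ℝ × ℝ → E} {a b : ℝ}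

theorem DifferentiableAt.hasDerivAt_slice_fst (hF : DifferentiableAt ℝ F (a, b)) :
    HasDerivAt (fun s => F (s, b)) (fderiv ℝ F (a, b) (1, 0)) a :=
  hF.hasFDerivAt.comp_hasDerivAt a ((hasDerivAt_id a).prodMk (hasDerivAt_const a b))

theorem DifferentiableAt.hasDerivAt_slice_snd (hF : DifferentiableAt ℝ F (a, b)) :
    HasDerivAt (fun s => F (a, s)) (fderiv ℝ F (a, b) (0, 1)) b :=
  hF.hasFDerivAt.comp_hasDerivAt b ((hasDerivAt_const b a).prodMk (hasDerivAt_id b))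

end PartialDerivatives

noncomputable def divergence (G : ℝ × ℝ → ℝ × ℝ) (p : ℝ × ℝ) : ℝ :=
  deriv (fun s => (G (s, p.2)).1) p.1 + deriv (fun s => (G (p.1, s)).2) p.2

noncomputable def rectIntegral (a₁ b₁ a₂ b₂ : ℝ) (f : ℝ × ℝ → ℝ) : ℝ :=
  ∫ x in a₁..b₁, ∫ y in a₂..b₂, f (x, y)

/-- The outward flux `∮ Gᵀn ds` of `G` through the boundary of `[a₁, b₁] × [a₂, b₂]`. -/
noncomputable def boundaryFlux (a₁ b₁ a₂ b₂ : ℝ) (G : ℝ × ℝ → ℝ × ℝ) : ℝ :=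
  (∫ y in a₂..b₂, (G (b₁, y)).1) - (∫ y in a₂..b₂, (G (a₁, y)).1)
    + (∫ x in a₁..b₁, (G (x, b₂)).2) - (∫ x in a₁..b₁, (G (x, a₂)).2)

section Divergence

variable {G : ℝ × ℝ → ℝ × ℝ}

theorem divergence_eq_fderiv (hG : Differentiable ℝ G) (p : ℝ × ℝ) :
    divergence G p =
      fderiv ℝ (fun q => (G q).1) p (1, 0) + fderiv ℝ (fun q => (G q).2) p (0, 1) := by
  rw [divergence, (hG.fst p).hasDerivAt_slice_fst.deriv, (hG.snd p).hasDerivAt_slice_snd.deriv]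

theorem ContDiff.continuous_divergence (hG : ContDiff ℝ 1 G) : Continuous (divergence G) := by
  rw [funext (divergence_eq_fderiv (hG.differentiable one_ne_zero))]
  exact ((hG.fst.continuous_fderiv one_ne_zero).clm_apply continuous_const).add
    ((hG.snd.continuous_fderiv one_ne_zero).clm_apply continuous_const)

theorem rectIntegral_divergence (hG : ContDiff ℝ 1 G) (a₁ b₁ a₂ b₂ : ℝ) :
    rectIntegral a₁ b₁ a₂ b₂ (divergence G) = boundaryFlux a₁ b₁ a₂ b₂ G := by
  have hG₁ : ContDiff ℝ 1 fun q => (G q).1 := hG.fst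
  have hG₂ : ContDiff ℝ 1 fun q => (G q).2 := hG.snd
  have hdiv := funext (divergence_eq_fderiv (hG.differentiable one_ne_zero))
  have h := integral2_divergence_prod_of_hasFDerivAt _ _ _ _ a₁ a₂ b₁ b₂
    hG₁.continuous.continuousOn hG₂.continuous.continuousOn
    (fun p _ => ((hG₁.differentiable one_ne_zero) p).hasFDerivAt)
    (fun p _ => ((hG₂.differentiable one_ne_zero) p).hasFDerivAt)
    ((hdiv ▸ hG.continuous_divergence).continuousOn.integrableOn_compact
      (isCompact_uIcc.prod isCompact_uIcc))
  simp only [rectIntegral, boundaryFlux, hdiv, h]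
  ring

end Divergence

theorem rectIntegral_add {f g : ℝ × ℝ → ℝ} (hf : Continuous f) (hg : Continuous g)
    (a₁ b₁ a₂ b₂ : ℝ) :
    rectIntegral a₁ b₁ a₂ b₂ (fun p => f p + g p) =
      rectIntegral a₁ b₁ a₂ b₂ f + rectIntegral a₁ b₁ a₂ b₂ g := by
  have hslice : ∀ {h : ℝ × ℝ → ℝ}, Continuous h → ∀ x, Continuous fun y => h (x, y) :=
    fun hh x => hh.comp (continuous_const.prodMk continuous_id)
  have hinner : ∀ {h : ℝ × ℝ → ℝ}, Continuous h → Continuous fun x => ∫ y in a₂..b₂, h (x, y) :=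
    fun {h} hh => intervalIntegral.continuous_parametric_intervalIntegral_of_continuous'
      (f := fun x y => h (x, y)) hh a₂ b₂
  simp only [rectIntegral]
  simp_rw [intervalIntegral.integral_add ((hslice hf _).intervalIntegrable _ _)
    ((hslice hg _).intervalIntegrable _ _)]
  exact intervalIntegral.integral_add ((hinner hf).intervalIntegrable _ _)
    ((hinner hg).intervalIntegrable _ _)

theorem rectIntegral_eq_zero {f : ℝ × ℝ → ℝ} {a₁ b₁ a₂ b₂ : ℝ}
    (hf : ∀ x ∈ uIcc a₁ b₁, ∀ y ∈ uIcc a₂ b₂, f (x, y) = 0) :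
    rectIntegral a₁ b₁ a₂ b₂ f = 0 := by
  rw [rectIntegral, intervalIntegral.integral_congr (g := fun _ => 0) fun x hx =>
    intervalIntegral.integral_congr (g := fun _ => 0) (hf x hx) |>.trans (by simp)]
  simp

theorem mul_divergence_add_mul_divergence {c : ℝ × ℝ → ℝ × ℝ} {u v : ℝ × ℝ → ℝ}
    (hc : Differentiable ℝ c) (hu : Differentiable ℝ u) (hv : Differentiable ℝ v) (p : ℝ × ℝ) :
    u p * divergence (fun q => ((c q).1 * v q, (c q).2 * v q)) p
        + v p * divergence (fun q => ((c q).1 * u q, (c q).2 * u q)) p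
      = u p * divergence c p * v p
        + divergence (fun q => (u q * v q * (c q).1, u q * v q * (c q).2)) p := by
  obtain ⟨x, y⟩ := p
  simp (disch := fun_prop) only [divergence, deriv_fun_mul]
  ring

theorem rectIntegral_mul_divergence_add_mul_divergence {c : ℝ × ℝ → ℝ × ℝ} {u v : ℝ × ℝ → ℝ}
    (hc : ContDiff ℝ 1 c) (hu : ContDiff ℝ 1 u) (hv : ContDiff ℝ 1 v) (a₁ b₁ a₂ b₂ : ℝ) :
    rectIntegral a₁ b₁ a₂ b₂ (fun p => u p * divergence (fun q => ((c q).1 * v q, (c q).2 * v q)) p)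
        + rectIntegral a₁ b₁ a₂ b₂
          (fun p => v p * divergence (fun q => ((c q).1 * u q, (c q).2 * u q)) p)
      = rectIntegral a₁ b₁ a₂ b₂ (fun p => u p * divergence c p * v p)
        + boundaryFlux a₁ b₁ a₂ b₂ (fun q => (u q * v q * (c q).1, u q * v q * (c q).2)) := by
  have hcv : ContDiff ℝ 1 fun q => ((c q).1 * v q, (c q).2 * v q) :=
    (hc.fst.mul hv).prodMk (hc.snd.mul hv)
  have hcu : ContDiff ℝ 1 fun q => ((c q).1 * u q, (c q).2 * u q) :=
    (hc.fst.mul hu).prodMk (hc.snd.mul hu)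
  have huvc : ContDiff ℝ 1 fun q => (u q * v q * (c q).1, u q * v q * (c q).2) :=
    ((hu.mul hv).mul hc.fst).prodMk ((hu.mul hv).mul hc.snd)
  calc _ = rectIntegral a₁ b₁ a₂ b₂ fun p =>
          u p * divergence (fun q => ((c q).1 * v q, (c q).2 * v q)) p
            + v p * divergence (fun q => ((c q).1 * u q, (c q).2 * u q)) p :=
        (rectIntegral_add (hu.continuous.fun_mul hcv.continuous_divergence)
          (hv.continuous.fun_mul hcu.continuous_divergence) _ _ _ _).symm
    _ = rectIntegral a₁ b₁ a₂ b₂ fun p =>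
          u p * divergence c p * v p
            + divergence (fun q => (u q * v q * (c q).1, u q * v q * (c q).2)) p := by
        simp only [mul_divergence_add_mul_divergence (hc.differentiable one_ne_zero)
          (hu.differentiable one_ne_zero) (hv.differentiable one_ne_zero)]
    _ = _ := by
        rw [rectIntegral_add ((hu.continuous.fun_mul hc.continuous_divergence).fun_mul
          hv.continuous) huvc.continuous_divergence, rectIntegral_divergence huvc]

section QuadraticForm

variable {𝕜 : Type*} [NontriviallyNormedField 𝕜] {m n : Type*} [Fintype n]
  {x y : 𝕜 → n → 𝕜} {x' y' : n → 𝕜} {t : 𝕜}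

theorem HasDerivAt.dotProduct (hx : HasDerivAt x x' t) (hy : HasDerivAt y y' t) :
    HasDerivAt (fun s => x s ⬝ᵥ y s) (x' ⬝ᵥ y t + x t ⬝ᵥ y') t := by
  refine (HasDerivAt.fun_sum (u := Finset.univ) fun i _ =>
    (hasDerivAt_pi.1 hx i).fun_mul (hasDerivAt_pi.1 hy i)).congr_deriv ?_
  rw [Finset.sum_add_distrib]
  rfl

theorem HasDerivAt.mulVec (A : Matrix m n 𝕜) (hx : HasDerivAt x x' t) :
    HasDerivAt (fun s => A *ᵥ x s) (A *ᵥ x') t :=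
  hasDerivAt_pi.2 fun i => by
    refine ((hasDerivAt_const t (A i)).dotProduct hx).congr_deriv ?_
    rw [zero_dotProduct, zero_add]
    rfl

theorem hasDerivAt_dotProduct_mulVec_of_mulVec_eq {M F : Matrix n n 𝕜} (hM : Mᵀ = M)
    (hx : HasDerivAt x x' t) (hdyn : M *ᵥ x' = F *ᵥ x t) :
    HasDerivAt (fun s => x s ⬝ᵥ (M *ᵥ x s)) (x t ⬝ᵥ ((F + Fᵀ) *ᵥ x t)) t := by
  refine (hx.dotProduct (hx.mulVec M)).congr_deriv ?_
  rw [← dotProduct_transpose_mulVec M (x t) x', hM, hdyn, add_mulVec, dotProduct_add,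
    dotProduct_transpose_mulVec]

end QuadraticForm

open Matrix in
/-- The 2D finite element discretization `M ẋ_d = F₁ x_d` of the transport equation on
the rectangle `Ω = [0,L₁] × [0,L₂]` satisfies the discrete energy balance
`Ḣ_d = -(1/2) x_dᵀ Q_c x_d - (1/2) x_dᵀ S x_d`; in particular, if `div(c) = 0` on `Ω`
then `Ḣ_d = -(1/2) x_dᵀ S x_d`, i.e. the scattering energy balance is preserved. -/
theorem fem_transport2d_discrete_energy_balance
    (N : ℕ) (L₁ L₂ : ℝ) (hL₁ : 0 < L₁) (hL₂ : 0 < L₂)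
    (c : ℝ × ℝ → ℝ × ℝ) (hc : ContDiff ℝ 1 c)
    (Φ : ℝ × ℝ → Fin N → ℝ) (hΦ : ContDiff ℝ 1 Φ)
    (M F₁ Qc S : Matrix (Fin N) (Fin N) ℝ)
    (hM : M = Matrix.of fun i j => ∫ ζ₁ in (0:ℝ)..L₁, ∫ ζ₂ in (0:ℝ)..L₂,
        Φ (ζ₁, ζ₂) i * Φ (ζ₁, ζ₂) j)
    (hF₁ : F₁ = Matrix.of fun i j => -∫ ζ₁ in (0:ℝ)..L₁, ∫ ζ₂ in (0:ℝ)..L₂,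
        Φ (ζ₁, ζ₂) i * (deriv (fun s => (c (s, ζ₂)).1 * Φ (s, ζ₂) j) ζ₁
          + deriv (fun s => (c (ζ₁, s)).2 * Φ (ζ₁, s) j) ζ₂))
    (hQc : Qc = Matrix.of fun i j => ∫ ζ₁ in (0:ℝ)..L₁, ∫ ζ₂ in (0:ℝ)..L₂,
        Φ (ζ₁, ζ₂) i *
          (deriv (fun s => (c (s, ζ₂)).1) ζ₁ + deriv (fun s => (c (ζ₁, s)).2) ζ₂)
          * Φ (ζ₁, ζ₂) j)
    (hS : S = Matrix.of fun i j =>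
        (∫ ζ₂ in (0:ℝ)..L₂, Φ (L₁, ζ₂) i * Φ (L₁, ζ₂) j * (c (L₁, ζ₂)).1)
        - (∫ ζ₂ in (0:ℝ)..L₂, Φ (0, ζ₂) i * Φ (0, ζ₂) j * (c (0, ζ₂)).1)
        + (∫ ζ₁ in (0:ℝ)..L₁, Φ (ζ₁, L₂) i * Φ (ζ₁, L₂) j * (c (ζ₁, L₂)).2)
        - (∫ ζ₁ in (0:ℝ)..L₁, Φ (ζ₁, 0) i * Φ (ζ₁, 0) j * (c (ζ₁, 0)).2))
    (x_d : ℝ → Fin N → ℝ) (hx_d : Differentiable ℝ x_d)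
    (hdyn : ∀ t : ℝ, M *ᵥ deriv x_d t = F₁ *ᵥ x_d t) :
    (∀ t : ℝ, HasDerivAt (fun s => (1 / 2) * (x_d s ⬝ᵥ (M *ᵥ x_d s)))
        (-(1 / 2) * (x_d t ⬝ᵥ (Qc *ᵥ x_d t)) - (1 / 2) * (x_d t ⬝ᵥ (S *ᵥ x_d t))) t) ∧
    ((∀ ζ₁ ∈ Set.Icc 0 L₁, ∀ ζ₂ ∈ Set.Icc 0 L₂,
        deriv (fun s => (c (s, ζ₂)).1) ζ₁ + deriv (fun s => (c (ζ₁, s)).2) ζ₂ = 0) →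
      ∀ t : ℝ, HasDerivAt (fun s => (1 / 2) * (x_d s ⬝ᵥ (M *ᵥ x_d s)))
        (-(1 / 2) * (x_d t ⬝ᵥ (S *ᵥ x_d t))) t) := by
  have hφ : ∀ i, ContDiff ℝ 1 fun p => Φ p i := contDiff_pi.mp hΦ
  have hM_symm : Mᵀ = M := by
    rw [hM]
    ext i j
    simp only [transpose_apply, of_apply, mul_comm]
  have hF₁_add_transpose : F₁ + F₁ᵀ = -(Qc + S) := by
    ext i j
    have h := rectIntegral_mul_divergence_add_mul_divergence hc (hφ i) (hφ j) 0 L₁ 0 L₂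
    dsimp only [rectIntegral, divergence, boundaryFlux] at h
    rw [hF₁, hQc, hS]
    simp only [Matrix.add_apply, Matrix.neg_apply, transpose_apply, of_apply]
    linarith
  have hbalance : ∀ t, HasDerivAt (fun s => (1 / 2) * (x_d s ⬝ᵥ (M *ᵥ x_d s)))
      (-(1 / 2) * (x_d t ⬝ᵥ (Qc *ᵥ x_d t)) - (1 / 2) * (x_d t ⬝ᵥ (S *ᵥ x_d t))) t := fun t => by
    refine ((hasDerivAt_dotProduct_mulVec_of_mulVec_eq hM_symm (hx_d t).hasDerivAt
      (hdyn t)).const_mul (1 / 2)).congr_deriv ?_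
    rw [hF₁_add_transpose, neg_mulVec, add_mulVec, dotProduct_neg, dotProduct_add]
    ring
  refine ⟨hbalance, fun hdiv t => ?_⟩
  have hQc_zero : Qc = 0 := by
    rw [hQc]
    ext i j
    refine rectIntegral_eq_zero (f := fun p => Φ p i * divergence c p * Φ p j) fun x hx y hy => ?_
    rw [uIcc_of_le hL₁.le] at hx
    rw [uIcc_of_le hL₂.le] at hy
    simp only [show divergence c (x, y) = 0 from hdiv x hx y hy, mul_zero, zero_mul]
  simpa [hQc_zero] using hbalance t
end

section
/- Let a < b, let 𝓗₀ > 0 be a constant Hamiltonian density, and let Φ : ℝ × ℝ → ℝ^N be continuously differentiable. Define the time-varying matrices E(t) = ∫_a^b Φ(ζ,t)Φ(ζ,t)ᵀ dζ and F(t) = -Φ(a,t)Φ(a,t)ᵀ - ∫_a^b ∂_ζΦ(ζ,t)Φ(ζ,t)ᵀ dζ - (1/𝓗₀) ∫_a^b Φ(ζ,t) ∂ₜΦ(ζ,t)ᵀ dζ, and set B(t) = Φ(b,t). Suppose x_d : ℝ → ℝ^N and u : ℝ → ℝ are differentiable functions satisfying, for all t: E(t) ẋ_d(t) = F(t) e_d(t)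 + B(t) u(t) with e_d(t) = 𝓗₀ x_d(t), and u(t) = Φ(b,t)ᵀ e_d(t); define the output y(t) = Φ(a,t)ᵀ e_d(t). Then the discretized Hamiltonian H_d(t) = (1/2) 𝓗₀ x_d(t)ᵀ E(t) x_d(t) is differentiable and satisfies Ḣ_d(t) = (1/2)(u(t)² - y(t)²); that is, when the Hamiltonian density is uniform in space, the moving mesh finite element discretization preserves the scattering energy preserving structure for any time parametrization of the basis functions. -/
/-!
Because `Q(t) = 𝓗₀ E(t)`, the discrete energy is `H_d = ½ 𝓗₀ ∫ (Φᵀ x_d)² dζ`. Differentiating it,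
the motion of the basis contributes `𝓗₀ ∫ (Φᵀ x_d)(∂ₜΦᵀ x_d)`, which is cancelled exactly by the
`(1/𝓗₀)`-term of `F` once the dynamics is paired with `𝓗₀ x_d`. The `∂_ζ`-term of `F` is
`½ ((Φ(b)ᵀ x_d)² - (Φ(a)ᵀ x_d)²)` by the fundamental theorem of calculus, and with the boundary
term `-Φ(a) Φ(a)ᵀ` and the input `u B` this leaves `½ (u² - y²)`.
-/

open MeasureTheory Matrix

section Slices

variable {V : Type*} [NormedAddCommGroup V] [NormedSpace ℝ V] {g : ℝ × ℝ → V}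

theorem hasDerivAt_slice_fst (hg : Differentiable ℝ g) (z t : ℝ) :
    HasDerivAt (fun z => g (z, t)) (fderiv ℝ g (z, t) (1, 0)) z :=
  (hg _).hasFDerivAt.comp_hasDerivAt z ((hasDerivAt_id z).prodMk (hasDerivAt_const z t))

theorem hasDerivAt_slice_snd (hg : Differentiable ℝ g) (ζ s : ℝ) :
    HasDerivAt (fun s => g (ζ, s)) (fderiv ℝ g (ζ, s) (0, 1)) s :=
  (hg _).hasFDerivAt.comp_hasDerivAt s ((hasDerivAt_const s ζ).prodMk (hasDerivAt_id s))

theorem ContDiff.continuous_deriv_slice_fst (hg : ContDiff ℝ 1 g) (t : ℝ) :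
    Continuous fun ζ => deriv (fun z => g (z, t)) ζ := by
  simp_rw [fun ζ => (hasDerivAt_slice_fst (hg.differentiable one_ne_zero) ζ t).deriv]
  exact ((hg.continuous_fderiv one_ne_zero).comp
    (continuous_id.prodMk continuous_const)).clm_apply continuous_const

theorem ContDiff.continuous_deriv_slice_snd (hg : ContDiff ℝ 1 g) (t : ℝ) :
    Continuous fun ζ => deriv (fun s => g (ζ, s)) t := by
  simp_rw [fun ζ => (hasDerivAt_slice_snd (hg.differentiable one_ne_zero) ζ t).deriv]
  exact ((hg.continuous_fderiv one_ne_zero).comp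
    (continuous_id.prodMk continuous_const)).clm_apply continuous_const

theorem ContDiff.hasDerivAt_intervalIntegral_slice [CompleteSpace V] (hg : ContDiff ℝ 1 g)
    (a b t : ℝ) :
    HasDerivAt (fun s => ∫ ζ in a..b, g (ζ, s)) (∫ ζ in a..b, deriv (fun s => g (ζ, s)) t) t := by
  have hgd : Differentiable ℝ g := hg.differentiable one_ne_zero
  have hdg : Continuous fun p => fderiv ℝ g p (0, 1) :=
    (hg.continuous_fderiv one_ne_zero).clm_apply continuous_const
  -- the dominating constant bounds `∂ₛg` on the compact set `[[a, b]] ×ˢ closedBall t 1`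
  obtain ⟨C, hC⟩ := (isCompact_uIcc.prod (isCompact_closedBall t 1)).exists_bound_of_continuousOn
    hdg.continuousOn
  have hslice : ∀ s, Continuous fun ζ => g (ζ, s) := fun s =>
    hg.continuous.comp (continuous_id.prodMk continuous_const)
  have key := intervalIntegral.hasDerivAt_integral_of_dominated_loc_of_deriv_le
    (F := fun s ζ => g (ζ, s)) (F' := fun s ζ => fderiv ℝ g (ζ, s) (0, 1)) (bound := fun _ => C)
    (μ := volume)
    (Metric.ball_mem_nhds t one_pos)
    (.of_forall fun s => (hslice s).aestronglyMeasurable) ((hslice t).intervalIntegrable a b)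
    (hdg.comp (continuous_id.prodMk continuous_const)).aestronglyMeasurable
    (.of_forall fun ζ hζ s hs => hC _ ⟨Set.uIoc_subset_uIcc hζ, Metric.ball_subset_closedBall hs⟩)
    intervalIntegrable_const (.of_forall fun ζ _ s _ => hasDerivAt_slice_snd hgd ζ s)
  refine key.2.congr_deriv (intervalIntegral.integral_congr fun ζ _ => ?_)
  exact ((hasDerivAt_slice_snd hgd ζ t).deriv).symm

end Slices

theorem HasDerivAt.dotProduct_const {n : Type*} [Fintype n] {f : ℝ → n → ℝ} {f' : n → ℝ}
    {t : ℝ} (hf : HasDerivAt f f' t) (v : n → ℝ) :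
    HasDerivAt (fun s => f s ⬝ᵥ v) (f' ⬝ᵥ v) t :=
  HasDerivAt.fun_sum fun i _ => (hasDerivAt_pi.mp hf i).mul_const (v i)

theorem hasDerivAt_dotProduct_mulVec {n : Type*} [Fintype n] {M : ℝ → Matrix n n ℝ}
    {M' : Matrix n n ℝ} {x : ℝ → n → ℝ} {x' : n → ℝ} {t : ℝ}
    (hM : ∀ i j, HasDerivAt (fun s => M s i j) (M' i j) t) (hx : HasDerivAt x x' t) :
    HasDerivAt (fun s => x s ⬝ᵥ M s *ᵥ x s)
      (x' ⬝ᵥ M t *ᵥ x t + x t ⬝ᵥ M' *ᵥ x t + x t ⬝ᵥ M t *ᵥ x') t := by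
  have hxi := hasDerivAt_pi.mp hx
  simp only [dotProduct, mulVec, Finset.mul_sum, ← Finset.sum_add_distrib]
  exact HasDerivAt.fun_sum fun i _ => HasDerivAt.fun_sum fun j _ =>
    ((hxi i).fun_mul ((hM i j).fun_mul (hxi j))).congr_deriv (by ring)

theorem dotProduct_vecMulVec_mulVec {n : Type*} [Fintype n] (v p q w : n → ℝ) :
    v ⬝ᵥ vecMulVec p q *ᵥ w = (v ⬝ᵥ p) * (q ⬝ᵥ w) := by
  simp [vecMulVec_mulVec, dotProduct_smul, mul_comm]

theorem intervalIntegral.integral_deriv_mul_self {f f' : ℝ → ℝ} {a b : ℝ}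
    (hf : ∀ x ∈ Set.uIcc a b, HasDerivAt f (f' x) x) (hf' : IntervalIntegrable f' volume a b) :
    ∫ x in a..b, f' x * f x = (f b ^ 2 - f a ^ 2) / 2 := by
  have h := intervalIntegral.integral_deriv_mul_eq_sub hf hf hf' hf'
  simp_rw [mul_comm (f _) (f' _), ← two_mul, intervalIntegral.integral_const_mul] at h
  linarith

section IntervalGram

variable {n : Type*} {a b : ℝ}

noncomputable def intervalGram (a b : ℝ) (f g : ℝ → n → ℝ) : Matrix n n ℝ :=
  Matrix.of fun i j => ∫ ζ in a..b, f ζ i * g ζ j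

theorem intervalGram_transpose (f g : ℝ → n → ℝ) :
    (intervalGram a b f g)ᵀ = intervalGram a b g f := by
  ext i j
  exact intervalIntegral.integral_congr fun ζ _ => mul_comm _ _

variable [Fintype n]

theorem dotProduct_intervalGram_self_mulVec_comm (f : ℝ → n → ℝ) (v w : n → ℝ) :
    v ⬝ᵥ intervalGram a b f f *ᵥ w = w ⬝ᵥ intervalGram a b f f *ᵥ v := by
  rw [← dotProduct_transpose_mulVec, intervalGram_transpose]

theorem dotProduct_intervalGram_mulVec {f g : ℝ → n → ℝ} (hf : Continuous f) (hg : Continuous g)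
    (v w : n → ℝ) :
    v ⬝ᵥ intervalGram a b f g *ᵥ w = ∫ ζ in a..b, (f ζ ⬝ᵥ v) * (g ζ ⬝ᵥ w) := by
  have hterm : ∀ i j, Continuous fun ζ => v i * (f ζ i * g ζ j * w j) := by fun_prop
  have hexpand : ∀ ζ, (f ζ ⬝ᵥ v) * (g ζ ⬝ᵥ w) = ∑ i, ∑ j, v i * (f ζ i * g ζ j * w j) := by
    intro ζ
    simp only [dotProduct, Finset.sum_mul_sum]
    exact Finset.sum_congr rfl fun i _ => Finset.sum_congr rfl fun j _ => by ring
  simp_rw [hexpand]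
  rw [intervalIntegral.integral_finsetSum fun i _ =>
    (continuous_finsetSum _ fun j _ => hterm i j).intervalIntegrable a b]
  refine Finset.sum_congr rfl fun i _ => ?_
  rw [intervalIntegral.integral_finsetSum fun j _ => (hterm i j).intervalIntegrable a b]
  simp only [intervalGram, mulVec, dotProduct, Matrix.of_apply, Finset.mul_sum,
    intervalIntegral.integral_const_mul, intervalIntegral.integral_mul_const]

theorem dotProduct_intervalGram_deriv_mulVec {p p' : ℝ → n → ℝ}
    (hp : ∀ ζ, HasDerivAt p (p' ζ) ζ) (hp' : Continuous p') (x : n → ℝ) :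
    x ⬝ᵥ intervalGram a b p' p *ᵥ x = ((p b ⬝ᵥ x) ^ 2 - (p a ⬝ᵥ x) ^ 2) / 2 := by
  have hpc : Continuous p := continuous_iff_continuousAt.mpr fun ζ => (hp ζ).continuousAt
  rw [dotProduct_intervalGram_mulVec hp' hpc]
  exact intervalIntegral.integral_deriv_mul_self (fun ζ _ => (hp ζ).dotProduct_const x)
    ((hp'.dotProduct continuous_const).intervalIntegrable a b)

end IntervalGram

theorem hasDerivAt_dotProduct_intervalGram_slice_mulVec {n : Type*} [Fintype n]
    {Φ : ℝ × ℝ → n → ℝ} (hΦ : ContDiff ℝ 1 Φ) {x : ℝ → n → ℝ} {x' : n → ℝ} {t : ℝ}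
    (hx : HasDerivAt x x' t) (a b : ℝ) :
    HasDerivAt (fun s => x s ⬝ᵥ intervalGram a b (fun ζ => Φ (ζ, s)) (fun ζ => Φ (ζ, s)) *ᵥ x s)
      (2 * (x t ⬝ᵥ intervalGram a b (fun ζ => Φ (ζ, t)) (fun ζ => Φ (ζ, t)) *ᵥ x')
        + 2 * ∫ ζ in a..b, (Φ (ζ, t) ⬝ᵥ x t)
            * ((fun k => deriv (fun s => Φ (ζ, s) k) t) ⬝ᵥ x t)) t := by
  set P : ℝ → n → ℝ := fun ζ => Φ (ζ, t)
  set Pt : ℝ → n → ℝ := fun ζ k => deriv (fun s => Φ (ζ, s) k) t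
  have hΦk : ∀ k, ContDiff ℝ 1 fun p => Φ p k := contDiff_pi.mp hΦ
  have hP : Continuous P := by fun_prop
  have hPt : Continuous Pt := continuous_pi fun k => (hΦk k).continuous_deriv_slice_snd t
  have hM : ∀ i j, HasDerivAt
      (fun s => intervalGram a b (fun ζ => Φ (ζ, s)) (fun ζ => Φ (ζ, s)) i j)
      ((intervalGram a b Pt P + intervalGram a b P Pt) i j) t := by
    intro i j
    have hdiff : ∀ ζ k, DifferentiableAt ℝ (fun s => Φ (ζ, s) k) t := fun ζ k =>
      (hasDerivAt_slice_snd ((hΦk k).differentiable one_ne_zero) ζ t).differentiableAt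
    refine ((hΦk i).mul (hΦk j)).hasDerivAt_intervalIntegral_slice a b t |>.congr_deriv ?_
    rw [Matrix.add_apply, intervalGram, intervalGram, of_apply, of_apply,
      ← intervalIntegral.integral_add
        ((by fun_prop : Continuous fun ζ => Pt ζ i * P ζ j).intervalIntegrable a b)
        ((by fun_prop : Continuous fun ζ => P ζ i * Pt ζ j).intervalIntegrable a b)]
    exact intervalIntegral.integral_congr fun ζ _ => deriv_fun_mul (hdiff ζ i) (hdiff ζ j)
  refine (hasDerivAt_dotProduct_mulVec hM hx).congr_deriv ?_
  rw [dotProduct_intervalGram_self_mulVec_comm _ x', add_mulVec, dotProduct_add,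
    dotProduct_intervalGram_mulVec hPt hP, dotProduct_intervalGram_mulVec hP hPt,
    intervalIntegral.integral_congr fun ζ _ => mul_comm (Pt ζ ⬝ᵥ x t) (P ζ ⬝ᵥ x t)]
  ring

/-- The matrix `F(t)` of the moving mesh discretization, with `c` in place of `1 / 𝓗₀`. -/
noncomputable def movingMeshF {n : Type*} [Fintype n] (a b c : ℝ) (Φ : ℝ × ℝ → n → ℝ) (t : ℝ) :
    Matrix n n ℝ :=
  -vecMulVec (Φ (a, t)) (Φ (a, t))
    - intervalGram a b (fun ζ k => deriv (fun z => Φ (z, t) k) ζ) (fun ζ => Φ (ζ, t))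
    - c • intervalGram a b (fun ζ => Φ (ζ, t)) (fun ζ k => deriv (fun s => Φ (ζ, s) k) t)

theorem dotProduct_movingMeshF_mulVec {n : Type*} [Fintype n] {Φ : ℝ × ℝ → n → ℝ}
    (hΦ : ContDiff ℝ 1 Φ) (a b c t : ℝ) (x : n → ℝ) :
    x ⬝ᵥ movingMeshF a b c Φ t *ᵥ x = -((Φ (a, t) ⬝ᵥ x) ^ 2 + (Φ (b, t) ⬝ᵥ x) ^ 2) / 2
      - c * ∫ ζ in a..b, (Φ (ζ, t) ⬝ᵥ x) * ((fun k => deriv (fun s => Φ (ζ, s) k) t) ⬝ᵥ x) := by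
  set P : ℝ → n → ℝ := fun ζ => Φ (ζ, t)
  set Pz : ℝ → n → ℝ := fun ζ k => deriv (fun z => Φ (z, t) k) ζ
  set Pt : ℝ → n → ℝ := fun ζ k => deriv (fun s => Φ (ζ, s) k) t
  have hΦk : ∀ k, ContDiff ℝ 1 fun p => Φ p k := contDiff_pi.mp hΦ
  have hP : Continuous P := by fun_prop
  have hPz : Continuous Pz := continuous_pi fun k => (hΦk k).continuous_deriv_slice_fst t
  have hPt : Continuous Pt := continuous_pi fun k => (hΦk k).continuous_deriv_slice_snd t
  have hPz_deriv : ∀ ζ, HasDerivAt P (Pz ζ) ζ := fun ζ => hasDerivAt_pi.mpr fun k =>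
    (hasDerivAt_slice_fst ((hΦk k).differentiable one_ne_zero) ζ t).differentiableAt.hasDerivAt
  rw [movingMeshF, sub_mulVec, sub_mulVec, neg_mulVec, smul_mulVec, dotProduct_sub,
    dotProduct_sub, dotProduct_neg, dotProduct_smul, dotProduct_vecMulVec_mulVec,
    dotProduct_comm x, dotProduct_intervalGram_deriv_mulVec hPz_deriv hPz,
    dotProduct_intervalGram_mulVec hP hPt, smul_eq_mul]
  ring

open Matrix in
theorem moving_mesh_discrete_scattering_energy_balance_general
    (N : ℕ) (a b : ℝ) (𝓗₀ : ℝ) (h𝓗₀ : 0 < 𝓗₀)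
    (Φ : ℝ × ℝ → Fin N → ℝ) (hΦ : ContDiff ℝ 1 Φ)
    (E F : ℝ → Matrix (Fin N) (Fin N) ℝ) (B : ℝ → Fin N → ℝ)
    (hE : ∀ t : ℝ, E t = Matrix.of fun i j => ∫ ζ in a..b, Φ (ζ, t) i * Φ (ζ, t) j)
    (hF : ∀ t : ℝ, F t = -vecMulVec (Φ (a, t)) (Φ (a, t))
        - (Matrix.of fun i j => ∫ ζ in a..b, deriv (fun z => Φ (z, t) i) ζ * Φ (ζ, t) j)
        - (1 / 𝓗₀) • (Matrix.of fun i j =>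
            ∫ ζ in a..b, Φ (ζ, t) i * deriv (fun s => Φ (ζ, s) j) t))
    (hB : ∀ t : ℝ, B t = Φ (b, t))
    (x_d e_d : ℝ → Fin N → ℝ) (u y : ℝ → ℝ)
    (hx_d : Differentiable ℝ x_d)
    (he_d : ∀ t : ℝ, e_d t = 𝓗₀ • x_d t)
    (hdyn : ∀ t : ℝ, E t *ᵥ deriv x_d t = F t *ᵥ e_d t + u t • B t)
    (huin : ∀ t : ℝ, u t = Φ (b, t) ⬝ᵥ e_d t)
    (hy : ∀ t : ℝ, y t = Φ (a, t) ⬝ᵥ e_d t) :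
    ∀ t : ℝ, HasDerivAt (fun s => (1 / 2) * 𝓗₀ * (x_d s ⬝ᵥ (E s *ᵥ x_d s)))
      ((1 / 2) * ((u t) ^ 2 - (y t) ^ 2)) t := by
  intro t
  set x := x_d t
  have hu_t : u t = 𝓗₀ * (Φ (b, t) ⬝ᵥ x) := by rw [huin, he_d, dotProduct_smul, smul_eq_mul]
  have hy_t : y t = 𝓗₀ * (Φ (a, t) ⬝ᵥ x) := by rw [hy, he_d, dotProduct_smul, smul_eq_mul]
  have hpower : x ⬝ᵥ E t *ᵥ deriv x_d t = 𝓗₀ * (x ⬝ᵥ F t *ᵥ x) + u t * (Φ (b, t) ⬝ᵥ x) := by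
    rw [hdyn, he_d, mulVec_smul, dotProduct_add, dotProduct_smul, dotProduct_smul, hB,
      dotProduct_comm x (Φ (b, t)), smul_eq_mul, smul_eq_mul]
  have hFt : F t = movingMeshF a b (1 / 𝓗₀) Φ t := hF t
  have henergy : HasDerivAt (fun s => x_d s ⬝ᵥ E s *ᵥ x_d s)
      (2 * (x ⬝ᵥ E t *ᵥ deriv x_d t) + 2 * ∫ ζ in a..b,
        (Φ (ζ, t) ⬝ᵥ x) * ((fun k => deriv (fun s => Φ (ζ, s) k) t) ⬝ᵥ x)) t := by
    rw [show E = fun s => intervalGram a b (fun ζ => Φ (ζ, s)) (fun ζ => Φ (ζ, s)) from funext hE]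
    exact hasDerivAt_dotProduct_intervalGram_slice_mulVec hΦ (hx_d t).hasDerivAt a b
  refine (henergy.const_mul (1 / 2 * 𝓗₀)).congr_deriv ?_
  rw [hpower, hFt, dotProduct_movingMeshF_mulVec hΦ, hu_t, hy_t]
  field_simp
  ring

open Matrix in
/-- With a constant (uniform in space) Hamiltonian density `𝓗₀ > 0`, the moving mesh
finite element discretization of the one-dimensional transport equation preserves the
scattering energy preserving structure for any time parametrization of the basis
functions: the discretized Hamiltonian `H_d(t) = (1/2) 𝓗₀ x_dᵀ E(t) x_d` satisfies
`Ḣ_d = (1/2)(u² - y²)`. -/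
theorem moving_mesh_discrete_scattering_energy_balance
    (N : ℕ) (a b : ℝ) (hab : a < b) (𝓗₀ : ℝ) (h𝓗₀ : 0 < 𝓗₀)
    (Φ : ℝ × ℝ → Fin N → ℝ) (hΦ : ContDiff ℝ 1 Φ)
    (E F : ℝ → Matrix (Fin N) (Fin N) ℝ) (B : ℝ → Fin N → ℝ)
    (hE : ∀ t : ℝ, E t = Matrix.of fun i j => ∫ ζ in a..b, Φ (ζ, t) i * Φ (ζ, t) j)
    (hF : ∀ t : ℝ, F t = -vecMulVec (Φ (a, t)) (Φ (a, t))
        - (Matrix.of fun i j => ∫ ζ in a..b, deriv (fun z => Φ (z, t) i) ζ * Φ (ζ, t) j)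
        - (1 / 𝓗₀) • (Matrix.of fun i j =>
            ∫ ζ in a..b, Φ (ζ, t) i * deriv (fun s => Φ (ζ, s) j) t))
    (hB : ∀ t : ℝ, B t = Φ (b, t))
    (x_d e_d : ℝ → Fin N → ℝ) (u y : ℝ → ℝ)
    (hx_d : Differentiable ℝ x_d) (hu : Differentiable ℝ u)
    (he_d : ∀ t : ℝ, e_d t = 𝓗₀ • x_d t)
    (hdyn : ∀ t : ℝ, E t *ᵥ deriv x_d t = F t *ᵥ e_d t + u t • B t)
    (huin : ∀ t : ℝ, u t = Φ (b, t) ⬝ᵥ e_d t)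
    (hy : ∀ t : ℝ, y t = Φ (a, t) ⬝ᵥ e_d t) :
    ∀ t : ℝ, HasDerivAt (fun s => (1 / 2) * 𝓗₀ * (x_d s ⬝ᵥ (E s *ᵥ x_d s)))
      ((1 / 2) * ((u t) ^ 2 - (y t) ^ 2)) t :=
  moving_mesh_discrete_scattering_energy_balance_general N a b 𝓗₀ h𝓗₀ Φ hΦ E F B hE hF hB x_d e_d u
    y hx_d he_d hdyn huin hy
end
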